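/- arXiv:1308.1524 — 5 statements merged into one kernel-verified Lean document; each statement's English description precedes it below -/
import Mathlib

section
/- Let m ≥ 1 and let P = (p_{ij})_{1≤i,j≤m} be a real m×m matrix with all entries p_{ij} > 0, row sums Σ_{j=1}^m p_{ij} ≤ 1 for every i, and Σ_{j=1}^m p_{i₀j} < 1 for at least one index i₀. Then there exists a constant c < 1 such that for every integer n ≥ m and every row vector x = (x₁,...,x_m) with x_i ≥ 0 for all i, one has ‖xP^n‖_{L¹} ≤ c‖x‖_{L¹}, where ‖x‖_{L¹} = Σ_{i=1}^m |x_i|. -/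
/-!
The row sums `sₙ = Pⁿ *ᵥ 1` govern the problem: on nonnegative vectors,
`‖x Pⁿ‖₁ = x ⬝ᵥ sₙ ≤ (maxᵢ sₙ i) ‖x‖₁`. Since `P ≥ 0` and `s₁ ≤ 1`, the vectors `sₙ` decrease
in `n`, and strict positivity of `P` spreads the deficit of the row `i₀` to every row after one
more step: `s₂ i = ∑ₖ P i k s₁ k < ∑ₖ P i k ≤ 1`. Hence `c = maxᵢ sₘ i < 1` works for all `n ≥ m`.
-/

open Finset

namespace Matrix

variable {ι : Type*} [Fintype ι]

theorem mulVec_one_apply (A : Matrix ι ι ℝ) (i : ι) : (A *ᵥ 1) i = ∑ j, A i j := by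
  simp [mulVec, dotProduct]

theorem mulVec_le_mulVec_of_nonneg {A : Matrix ι ι ℝ} (hA : ∀ i j, 0 ≤ A i j) {v w : ι → ℝ}
    (hvw : v ≤ w) : A *ᵥ v ≤ A *ᵥ w := fun i =>
  sum_le_sum fun j _ => mul_le_mul_of_nonneg_left (hvw j) (hA i j)

theorem mulVec_apply_lt_mulVec_apply_of_pos {A : Matrix ι ι ℝ} (hA : ∀ i j, 0 < A i j)
    {v w : ι → ℝ} (hvw : v ≤ w) {j₀ : ι} (hj₀ : v j₀ < w j₀) (i : ι) :
    (A *ᵥ v) i < (A *ᵥ w) i :=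
  sum_lt_sum (fun j _ => mul_le_mul_of_nonneg_left (hvw j) (hA i j).le)
    ⟨j₀, mem_univ _, mul_lt_mul_of_pos_left hj₀ (hA i j₀)⟩

theorem sum_abs_vecMul_le {A : Matrix ι ι ℝ} (hA : ∀ i j, 0 ≤ A i j) {c : ℝ}
    (hc : ∀ i, (A *ᵥ 1) i ≤ c) {x : ι → ℝ} (hx : 0 ≤ x) :
    ∑ j, |(x ᵥ* A) j| ≤ c * ∑ i, |x i| := by
  have hxA : 0 ≤ x ᵥ* A := fun j => dotProduct_nonneg_of_nonneg hx fun i => hA i j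
  calc ∑ j, |(x ᵥ* A) j| = x ⬝ᵥ (A *ᵥ 1) := by
        simp_rw [abs_of_nonneg (hxA _), dotProduct_mulVec, dotProduct_one]
    _ ≤ x ⬝ᵥ (c • 1) := dotProduct_le_dotProduct_of_nonneg_left (fun i => by simpa using hc i) hx
    _ = c * ∑ i, |x i| := by
        simp_rw [dotProduct_smul, dotProduct_one, abs_of_nonneg (hx _), smul_eq_mul]

variable [DecidableEq ι] {P : Matrix ι ι ℝ}

theorem antitone_pow_mulVec_one (hP : ∀ i j, 0 ≤ P i j) (hrow : P *ᵥ 1 ≤ 1) :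
    Antitone fun n => P ^ n *ᵥ 1 := by
  refine antitone_nat_of_succ_le fun n => ?_
  rw [pow_succ, ← mulVec_mulVec]
  exact mulVec_le_mulVec_of_nonneg (pow_apply_nonneg hP n) hrow

theorem sq_mulVec_one_apply_lt_one (hP : ∀ i j, 0 < P i j) (hrow : P *ᵥ 1 ≤ 1) {i₀ : ι}
    (hi₀ : (P *ᵥ 1) i₀ < 1) (i : ι) : (P ^ 2 *ᵥ 1) i < 1 := by
  rw [sq, ← mulVec_mulVec]
  exact (mulVec_apply_lt_mulVec_apply_of_pos hP hrow hi₀ i).trans_le (hrow i)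

theorem pow_mulVec_one_apply_lt_one (hP : ∀ i j, 0 < P i j) (hrow : P *ᵥ 1 ≤ 1) {i₀ : ι}
    (hi₀ : (P *ᵥ 1) i₀ < 1) {n : ℕ} (hn : Fintype.card ι ≤ n) (i : ι) : (P ^ n *ᵥ 1) i < 1 := by
  have hanti := antitone_pow_mulVec_one (fun i j => (hP i j).le) hrow
  have hcard : 0 < Fintype.card ι := Fintype.card_pos_iff.2 ⟨i₀⟩
  rcases Nat.lt_or_ge (Fintype.card ι) 2 with hlt | hge
  · have : Subsingleton ι := Fintype.card_le_one_iff_subsingleton.1 (by omega)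
    obtain rfl := Subsingleton.elim i i₀
    exact (hanti (show 1 ≤ n by omega) i).trans_lt (by simpa using hi₀)
  · exact (hanti (hge.trans hn) i).trans_lt (sq_mulVec_one_apply_lt_one hP hrow hi₀ i)

end Matrix

open Matrix

theorem generalized_jackson_contraction_general
    (m : ℕ) (P : Matrix (Fin m) (Fin m) ℝ)
    (hpos : ∀ i j, 0 < P i j)
    (hrow : ∀ i, ∑ j, P i j ≤ 1)
    (hexit : ∃ i₀, ∑ j, P i₀ j < 1) :
    ∃ c : ℝ, c < 1 ∧
      ∀ n : ℕ, m ≤ n → ∀ x : Fin m → ℝ, (∀ i, 0 ≤ x i) →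
        ∑ j, |Matrix.vecMul x (P ^ n) j| ≤ c * ∑ i, |x i| := by
  obtain ⟨i₀, hi₀⟩ := hexit
  have hrow' : P *ᵥ 1 ≤ 1 := fun i => (mulVec_one_apply P i).trans_le (hrow i)
  have hi₀' : (P *ᵥ 1) i₀ < 1 := (mulVec_one_apply P i₀).trans_lt hi₀
  have hcard : Fintype.card (Fin m) ≤ m := (Fintype.card_fin m).le
  refine ⟨univ.sup' ⟨i₀, mem_univ _⟩ (P ^ m *ᵥ 1),
    (sup'_lt_iff _).2 fun i _ => pow_mulVec_one_apply_lt_one hpos hrow' hi₀' hcard i, ?_⟩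
  intro n hn x hx
  refine sum_abs_vecMul_le (pow_apply_nonneg (fun i j => (hpos i j).le) n) (fun i => ?_) hx
  exact (antitone_pow_mulVec_one (fun i j => (hpos i j).le) hrow' hn i).trans
    (le_sup' _ (mem_univ i))

/-- For an `m × m` matrix `P` with strictly positive entries, row sums at most `1`,
and at least one row sum strictly less than `1`, there is a constant `c < 1` such that for every
`n ≥ m` and every nonnegative row vector `x` one has `‖x Pⁿ‖_{L¹} ≤ c ‖x‖_{L¹}`. -/
theorem generalized_jackson_contraction
    (m : ℕ) (hm : 1 ≤ m) (P : Matrix (Fin m) (Fin m) ℝ)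
    (hpos : ∀ i j, 0 < P i j)
    (hrow : ∀ i, ∑ j, P i j ≤ 1)
    (hexit : ∃ i₀, ∑ j, P i₀ j < 1) :
    ∃ c : ℝ, c < 1 ∧
      ∀ n : ℕ, m ≤ n → ∀ x : Fin m → ℝ, (∀ i, 0 ≤ x i) →
        ∑ j, |Matrix.vecMul x (P ^ n) j| ≤ c * ∑ i, |x i| :=
  generalized_jackson_contraction_general m P hpos hrow hexit
end

section
/- Let P = (p_{ij})_{i,j∈ℕ} be a double semi-stochastic matrix, i.e. p_{ij} ≥ 0, Σ_j p_{ij} ≤ 1 for every i, and Σ_i p_{ij} ≤ 1 for every j, and let λ*(j) = lim_{n→∞} Σ_i (P^n)_{ij} (this limit exists since the column sums of P^n are non-increasing in n). Then λ* is an invariant measure for P: for every j, λ*(j) = Σ_i λ*(i) p_{ij}. -/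
/-! The column sums `c_n(j) = ∑_i (Pⁿ)_{ij}` obey `c_{n+1} = c_n P`, so they decrease in `n` as
soon as `c_1 = 𝟙 P ≤ 𝟙 = c_0`. Since `c_0 P` is summable, monotone convergence for decreasing
sequences (with respect to counting measure) lets the limit `λ*` pass through `c ↦ c P`. -/

open Filter Topology ENNReal

/-- The `n`-th power of a countably-indexed nonnegative matrix:
`(P^0)_{ij} = δ_{ij}` and `(P^{n+1})_{ij} = ∑_k (P^n)_{ik} p_{kj}`. -/
noncomputable def matPow (P : ℕ → ℕ → ℝ≥0∞) : ℕ → ℕ → ℕ → ℝ≥0∞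
  | 0 => fun i j => if i = j then 1 else 0
  | n + 1 => fun i j => ∑' k, matPow P n i k * P k j

theorem ENNReal.tsum_iInf_of_antitone {α : Type*} {f : ℕ → α → ℝ≥0∞} (hf : Antitone f)
    (h_fin : ∑' a, f 0 a ≠ ∞) : ∑' a, ⨅ n, f n a = ⨅ n, ∑' a, f n a := by
  let _ : MeasurableSpace α := ⊤
  simp only [← MeasureTheory.lintegral_count] at h_fin ⊢
  exact MeasureTheory.lintegral_iInf (fun _ => measurable_from_top) hf h_fin

namespace matPow

variable (P : ℕ → ℕ → ℝ≥0∞)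

noncomputable def colSum (n j : ℕ) : ℝ≥0∞ :=
  ∑' i, matPow P n i j

theorem colSum_zero (j : ℕ) : colSum P 0 j = 1 := by
  simp [colSum, matPow, tsum_ite_eq]

theorem colSum_succ (n j : ℕ) : colSum P (n + 1) j = ∑' k, colSum P n k * P k j := by
  rw [colSum, matPow, ENNReal.tsum_comm]
  exact tsum_congr fun k => ENNReal.tsum_mul_right

variable {P}

theorem colSum_antitone (hcol : ∀ j, ∑' i, P i j ≤ 1) : Antitone (colSum P) := by
  refine antitone_nat_of_succ_le fun n => ?_
  induction n with
  | zero => intro j; simpa [colSum_succ, colSum_zero] using hcol j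
  | succ n ih =>
    intro j
    rw [colSum_succ, colSum_succ P n]
    exact ENNReal.tsum_le_tsum fun k => mul_le_mul_left (ih k) _

end matPow

open matPow

theorem lambdaStar_invariant_general
    (P : ℕ → ℕ → ℝ≥0∞)
    (hcol : ∀ j, ∑' i, P i j ≤ 1)
    (lamStar : ℕ → ℝ≥0∞)
    (hlim : ∀ j, Tendsto (fun n => ∑' i, matPow P n i j) atTop (𝓝 (lamStar j))) :
    ∀ j, lamStar j = ∑' i, lamStar i * P i j := by
  have hanti := colSum_antitone hcol
  have hlamStar (j : ℕ) : lamStar j = ⨅ n, colSum P n j :=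
    tendsto_nhds_unique (hlim j) (tendsto_atTop_iInf fun _ _ h => hanti h j)
  have hP_ne_top (i j : ℕ) : P i j ≠ ∞ :=
    ne_top_of_le_ne_top one_ne_top ((ENNReal.le_tsum i).trans (hcol j))
  intro j
  calc lamStar j = ⨅ n, colSum P (n + 1) j :=
        tendsto_nhds_unique ((hlim j).comp (tendsto_add_atTop_nat 1))
          (tendsto_atTop_iInf fun _ _ h => hanti (Nat.succ_le_succ h) j)
    _ = ⨅ n, ∑' i, colSum P n i * P i j := by simp only [colSum_succ]
    _ = ∑' i, ⨅ n, colSum P n i * P i j := by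
        refine (ENNReal.tsum_iInf_of_antitone (fun _ _ h i => mul_le_mul_left (hanti h i) (P i j))
          ?_).symm
        simpa [colSum_zero] using ne_top_of_le_ne_top one_ne_top (hcol j)
    _ = ∑' i, lamStar i * P i j := by
        simp only [hlamStar, ENNReal.iInf_mul fun h => absurd h (hP_ne_top _ j)]

/-- For a double semi-stochastic matrix `P`, the limit
`λ*(j) = lim_n ∑_i (Pⁿ)_{ij}` defines an invariant measure: `λ*(j) = ∑_i λ*(i) p_{ij}`. -/
theorem lambdaStar_invariant
    (P : ℕ → ℕ → ℝ≥0∞)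
    (hrow : ∀ i, ∑' j, P i j ≤ 1)
    (hcol : ∀ j, ∑' i, P i j ≤ 1)
    (lamStar : ℕ → ℝ≥0∞)
    (hlim : ∀ j, Tendsto (fun n => ∑' i, matPow P n i j) atTop (𝓝 (lamStar j))) :
    ∀ j, lamStar j = ∑' i, lamStar i * P i j :=
  lambdaStar_invariant_general P hcol lamStar hlim
end

section
/- (Kelbert–Kontsevich–Rybko) Let P = (p_{ij})_{i,j∈ℕ} be an irreducible double semi-stochastic matrix, i.e. p_{ij} ≥ 0, Σ_j p_{ij} ≤ 1 for every i, Σ_i p_{ij} ≤ 1 for every j, and for every pair i, j there exists n with (P^n)_{ij} > 0. Let λ*(j) = lim_{n→∞} Σ_i (P^n)_{ij}. Then the following two properties are equivalent: (1) λ*(j) = 0 for every j; (2) the zero measure is the only nonnegative invariant L∞-measure of P, i.e. the only bounded nonnegative function λ on ℕ satisfying λ(j) = Σ_i λ(i) p_{ij} for all j is λ ≡ 0. -/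
/-!
Write `c n j = ∑ᵢ (Pⁿ)ᵢⱼ` for the column sums of the powers, so `λ* = lim c n`.
Since `c (n+1) = c n · P` and `c n ≤ 1`, dominated convergence (with dominating function the
column `P · j`, whose sum is at most `1`) makes `λ*` itself a bounded invariant measure;
this gives one implication. Conversely, a bounded invariant `λ ≤ C` satisfies
`λ = λ Pⁿ ≤ C c n` for every `n`, hence `λ ≤ C λ*`, so `λ* = 0` forces `λ = 0`.
-/

open Filter Topology ENNReal

open MeasureTheory

theorem ENNReal.tendsto_tsum_of_dominated_convergence {α : Type*} {F : ℕ → α → ℝ≥0∞}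
    {f : α → ℝ≥0∞} (bound : α → ℝ≥0∞) (h_bound : ∀ n a, F n a ≤ bound a)
    (h_fin : ∑' a, bound a ≠ ∞) (h_lim : ∀ a, Tendsto (fun n => F n a) atTop (𝓝 (f a))) :
    Tendsto (fun n => ∑' a, F n a) atTop (𝓝 (∑' a, f a)) := by
  let _ : MeasurableSpace α := ⊤
  simpa only [lintegral_count] using
    tendsto_lintegral_of_dominated_convergence (μ := Measure.count) bound
      (fun _ => .of_discrete) (fun n => .of_forall (h_bound n))
      (by rwa [lintegral_count]) (.of_forall h_lim)

def IsInvariantMeasure (P : ℕ → ℕ → ℝ≥0∞) (lam : ℕ → ℝ≥0∞) : Prop :=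
  ∀ j, lam j = ∑' i, lam i * P i j

namespace matPow

variable (P : ℕ → ℕ → ℝ≥0∞)

theorem tsum_mul_zero (lam : ℕ → ℝ≥0∞) (j : ℕ) :
    ∑' i, lam i * matPow P 0 i j = lam j := by
  rw [tsum_eq_single j fun i hi => by simp [matPow, hi]]
  simp [matPow]

theorem tsum_mul_succ (lam : ℕ → ℝ≥0∞) (n j : ℕ) :
    ∑' i, lam i * matPow P (n + 1) i j = ∑' k, (∑' i, lam i * matPow P n i k) * P k j := by
  simp only [matPow, ← ENNReal.tsum_mul_left, ← ENNReal.tsum_mul_right, mul_assoc]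
  exact ENNReal.tsum_comm

theorem tsum_succ (n j : ℕ) :
    ∑' i, matPow P (n + 1) i j = ∑' k, (∑' i, matPow P n i k) * P k j := by
  simpa only [one_mul] using tsum_mul_succ P (fun _ => 1) n j

theorem tsum_le_one (hcol : ∀ j, ∑' i, P i j ≤ 1) (n j : ℕ) :
    ∑' i, matPow P n i j ≤ 1 := by
  induction n generalizing j with
  | zero => simpa only [one_mul] using (tsum_mul_zero P (fun _ => 1) j).le
  | succ n ih =>
    calc ∑' i, matPow P (n + 1) i j
        = ∑' k, (∑' i, matPow P n i k) * P k j := tsum_succ P n j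
      _ ≤ ∑' k, P k j := ENNReal.tsum_le_tsum fun k => mul_le_of_le_one_left' (ih k)
      _ ≤ 1 := hcol j

end matPow

theorem IsInvariantMeasure.tsum_mul_matPow {P : ℕ → ℕ → ℝ≥0∞} {lam : ℕ → ℝ≥0∞}
    (hlam : IsInvariantMeasure P lam) (n j : ℕ) : ∑' i, lam i * matPow P n i j = lam j := by
  induction n generalizing j with
  | zero => exact matPow.tsum_mul_zero P lam j
  | succ n ih => simp only [matPow.tsum_mul_succ, ih, ← hlam j]

section KKR

variable {P : ℕ → ℕ → ℝ≥0∞} {lamStar : ℕ → ℝ≥0∞}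

theorem isInvariantMeasure_of_tendsto_tsum_matPow (hcol : ∀ j, ∑' i, P i j ≤ 1)
    (hlim : ∀ j, Tendsto (fun n => ∑' i, matPow P n i j) atTop (𝓝 (lamStar j))) :
    IsInvariantMeasure P lamStar := by
  intro j
  have hP_ne_top : ∀ k, P k j ≠ ∞ := fun k =>
    ne_top_of_le_ne_top one_ne_top ((ENNReal.le_tsum k).trans (hcol j))
  have hshift := (hlim j).comp (tendsto_add_atTop_nat 1)
  simp only [Function.comp_def, matPow.tsum_succ] at hshift
  refine tendsto_nhds_unique hshift <|
    ENNReal.tendsto_tsum_of_dominated_convergence (fun k => P k j)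
      (fun n k => mul_le_of_le_one_left' (matPow.tsum_le_one P hcol n k))
      (ne_top_of_le_ne_top one_ne_top (hcol j))
      (fun k => ENNReal.Tendsto.mul_const (hlim k) (.inr (hP_ne_top k)))

theorem IsInvariantMeasure.le_mul_of_tendsto_tsum_matPow {lam : ℕ → ℝ≥0∞}
    (hlam : IsInvariantMeasure P lam) {C : ℝ≥0∞} (hC : C ≠ ∞) (hle : ∀ i, lam i ≤ C)
    (hlim : ∀ j, Tendsto (fun n => ∑' i, matPow P n i j) atTop (𝓝 (lamStar j))) (j : ℕ) :
    lam j ≤ C * lamStar j := by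
  refine ge_of_tendsto (ENNReal.Tendsto.const_mul (hlim j) (.inr hC)) (.of_forall fun n => ?_)
  calc lam j = ∑' i, lam i * matPow P n i j := (hlam.tsum_mul_matPow n j).symm
    _ ≤ ∑' i, C * matPow P n i j := ENNReal.tsum_le_tsum fun i => mul_le_mul_left (hle i) _
    _ = C * ∑' i, matPow P n i j := ENNReal.tsum_mul_left

end KKR

theorem KKR_theorem_general
    (P : ℕ → ℕ → ℝ≥0∞)
    (hcol : ∀ j, ∑' i, P i j ≤ 1)
    (lamStar : ℕ → ℝ≥0∞)
    (hlim : ∀ j, Tendsto (fun n => ∑' i, matPow P n i j) atTop (𝓝 (lamStar j))) :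
    (∀ j, lamStar j = 0) ↔
      (∀ lam : ℕ → ℝ≥0∞, (∃ C : ℝ≥0∞, C ≠ ⊤ ∧ ∀ i, lam i ≤ C) →
        (∀ j, lam j = ∑' i, lam i * P i j) → ∀ j, lam j = 0) := by
  constructor
  · rintro hstar lam ⟨C, hC, hle⟩ hlam j
    simpa [hstar j] using IsInvariantMeasure.le_mul_of_tendsto_tsum_matPow hlam hC hle hlim j
  · intro huniq
    have hstar_le_one : ∀ j, lamStar j ≤ 1 := fun j =>
      le_of_tendsto (hlim j) (.of_forall fun n => matPow.tsum_le_one P hcol n j)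
    exact huniq lamStar ⟨1, one_ne_top, hstar_le_one⟩
      (isInvariantMeasure_of_tendsto_tsum_matPow hcol hlim)

/-- Kelbert–Kontsevich–Rybko: For an irreducible double semi-stochastic matrix `P`,
the invariant measure `λ*(j) = lim_n ∑_i (Pⁿ)_{ij}` vanishes identically if and only if the zero
measure is the only nonnegative invariant `L∞`-measure of `P`. -/
theorem KKR_theorem
    (P : ℕ → ℕ → ℝ≥0∞)
    (hrow : ∀ i, ∑' j, P i j ≤ 1)
    (hcol : ∀ j, ∑' i, P i j ≤ 1)
    (hirr : ∀ i j, ∃ n, 0 < matPow P n i j)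
    (lamStar : ℕ → ℝ≥0∞)
    (hlim : ∀ j, Tendsto (fun n => ∑' i, matPow P n i j) atTop (𝓝 (lamStar j))) :
    (∀ j, lamStar j = 0) ↔
      (∀ lam : ℕ → ℝ≥0∞, (∃ C : ℝ≥0∞, C ≠ ⊤ ∧ ∀ i, lam i ≤ C) →
        (∀ j, lam j = ∑' i, lam i * P i j) → ∀ j, lam j = 0) :=
  KKR_theorem_general P hcol lamStar hlim
end

section
/- Let P = (p_{ij})_{i,j∈ℕ} be a stochastic matrix (p_{ij} ≥ 0 and Σ_j p_{ij} = 1 for every i). Suppose there is n₀ such that for every n ≥ n₀ and every j the column sum ‖γ_j^{(n)}‖_{L¹} = Σ_i (P^n)_{ij} is finite, and suppose that the limits λ*(j) = lim_{n→∞} Σ_i (P^n)_{ij} exist for every j. If λ*(j) = 0 for all j, then for every nonnegative L∞-measure k (i.e. k(i) ≥ 0 with sup_i k(i) < ∞) one has (kP^n)(j) = Σ_i k(i)(P^n)_{ij} → 0 as n → ∞ for every j; in particular the zero measure is the only nonnegative invariant L∞-measure of P. -/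
open Filter Topology ENNReal

section VecMulMatPow

variable (P : ℕ → ℕ → ℝ≥0∞) (v : ℕ → ℝ≥0∞)

lemma tsum_mul_matPow_zero (j : ℕ) : ∑' i, v i * matPow P 0 i j = v j := by
  rw [tsum_eq_single j fun i hij => by simp [matPow, hij]]
  simp [matPow]

lemma tsum_mul_matPow_succ (n j : ℕ) :
    ∑' i, v i * matPow P (n + 1) i j = ∑' k, (∑' i, v i * matPow P n i k) * P k j :=
  calc ∑' i, v i * matPow P (n + 1) i j
      = ∑' i, ∑' k, v i * matPow P n i k * P k j := by
        simp only [matPow, ← ENNReal.tsum_mul_left, mul_assoc]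
    _ = ∑' k, ∑' i, v i * matPow P n i k * P k j := ENNReal.tsum_comm
    _ = ∑' k, (∑' i, v i * matPow P n i k) * P k j := by
        simp only [ENNReal.tsum_mul_right]

lemma tsum_mul_matPow_of_invariant (hinv : ∀ j, v j = ∑' i, v i * P i j) (n j : ℕ) :
    ∑' i, v i * matPow P n i j = v j := by
  induction n generalizing j with
  | zero => exact tsum_mul_matPow_zero P v j
  | succ n ih => simp only [tsum_mul_matPow_succ, ih, ← hinv]

end VecMulMatPow

lemma tendsto_tsum_mul_of_bounded {ι α : Type*} {l : Filter α} {f : α → ι → ℝ≥0∞}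
    (hf : Tendsto (fun a => ∑' i, f a i) l (𝓝 0)) {k : ι → ℝ≥0∞} {C : ℝ≥0∞} (hC : C ≠ ⊤)
    (hk : ∀ i, k i ≤ C) :
    Tendsto (fun a => ∑' i, k i * f a i) l (𝓝 0) := by
  have hCf : Tendsto (fun a => C * ∑' i, f a i) l (𝓝 0) := by
    simpa using ENNReal.Tendsto.const_mul hf (Or.inr hC)
  refine tendsto_of_tendsto_of_tendsto_of_le_of_le tendsto_const_nhds hCf (fun _ => zero_le)
    fun a => ?_
  calc ∑' i, k i * f a i ≤ ∑' i, C * f a i := ENNReal.tsum_le_tsum fun i => by gcongr; exact hk i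
    _ = C * ∑' i, f a i := ENNReal.tsum_mul_left

theorem stochastic_summable_columns_convergence_general
    (P : ℕ → ℕ → ℝ≥0∞)
    (lamStar : ℕ → ℝ≥0∞)
    (hlim : ∀ j, Tendsto (fun n => ∑' i, matPow P n i j) atTop (𝓝 (lamStar j)))
    (hzero : ∀ j, lamStar j = 0) :
    (∀ k : ℕ → ℝ≥0∞, (∃ C : ℝ≥0∞, C ≠ ⊤ ∧ ∀ i, k i ≤ C) →
      ∀ j, Tendsto (fun n => ∑' i, k i * matPow P n i j) atTop (𝓝 0)) ∧
    (∀ lam : ℕ → ℝ≥0∞, (∃ C : ℝ≥0∞, C ≠ ⊤ ∧ ∀ i, lam i ≤ C) →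
      (∀ j, lam j = ∑' i, lam i * P i j) → ∀ j, lam j = 0) := by
  have hdecay : ∀ k : ℕ → ℝ≥0∞, (∃ C : ℝ≥0∞, C ≠ ⊤ ∧ ∀ i, k i ≤ C) →
      ∀ j, Tendsto (fun n => ∑' i, k i * matPow P n i j) atTop (𝓝 0) :=
    fun k ⟨_, hC, hk⟩ j => tendsto_tsum_mul_of_bounded (hzero j ▸ hlim j) hC hk
  refine ⟨hdecay, fun lam hbdd hinv j => ?_⟩
  have hconst : Tendsto (fun n => ∑' i, lam i * matPow P n i j) atTop (𝓝 (lam j)) := by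
    simp only [tsum_mul_matPow_of_invariant P lam hinv]
    exact tendsto_const_nhds
  exact tendsto_nhds_unique hconst (hdecay lam hbdd j)

/-- Theorem T04: Let `P` be a stochastic matrix whose powers have finite column
sums for `n ≥ n₀`, and suppose the limits `λ*(j) = lim_n ∑_i (Pⁿ)_{ij}` exist. If `λ* ≡ 0`, then
for every nonnegative `L∞`-measure `k` one has `(kPⁿ)(j) → 0` for every `j`; in particular the
zero measure is the only nonnegative invariant `L∞`-measure of `P`. -/
theorem stochastic_summable_columns_convergence
    (P : ℕ → ℕ → ℝ≥0∞)
    (hstoch : ∀ i, ∑' j, P i j = 1)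
    (n₀ : ℕ)
    (hfin : ∀ n, n₀ ≤ n → ∀ j, ∑' i, matPow P n i j ≠ ⊤)
    (lamStar : ℕ → ℝ≥0∞)
    (hlim : ∀ j, Tendsto (fun n => ∑' i, matPow P n i j) atTop (𝓝 (lamStar j)))
    (hzero : ∀ j, lamStar j = 0) :
    (∀ k : ℕ → ℝ≥0∞, (∃ C : ℝ≥0∞, C ≠ ⊤ ∧ ∀ i, k i ≤ C) →
      ∀ j, Tendsto (fun n => ∑' i, k i * matPow P n i j) atTop (𝓝 0)) ∧
    (∀ lam : ℕ → ℝ≥0∞, (∃ C : ℝ≥0∞, C ≠ ⊤ ∧ ∀ i, lam i ≤ C) →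
      (∀ j, lam j = ∑' i, lam i * P i j) → ∀ j, lam j = 0) :=
  stochastic_summable_columns_convergence_general P lamStar hlim hzero
end

section
/- Let P = (p_{ij})_{i,j∈ℕ} be a matrix with nonnegative entries such that there is n₀ with Σ_i (P^n)_{ij} < ∞ for every j and every n ≥ n₀. Suppose that for one index j₀ one has Σ_i (P^n)_{i j₀} → 0 as n → ∞, and that p_{i j₀} > 0 for every i. Then Σ_i (P^n)_{ij} → 0 as n → ∞ for every index j. -/
open Filter Topology ENNReal

/-! A positive entry `p_{j j₀}` lets column `j` of `Pⁿ` feed column `j₀` of `Pⁿ⁺¹`: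
`(∑ᵢ (Pⁿ)_{ij}) · p_{j j₀} ≤ ∑ᵢ (Pⁿ⁺¹)_{i j₀}`. The right side tends to `0`, and
so, after dividing by the positive constant `p_{j j₀}`, does the column sum of `j`. -/

namespace ENNReal

theorem tendsto_nhds_zero_of_mul_const {α : Type*} {l : Filter α} {f : α → ℝ≥0∞} {c : ℝ≥0∞}
    (hc : c ≠ 0) (hf : Tendsto (fun x => f x * c) l (𝓝 0)) : Tendsto f l (𝓝 0) := by
  -- `c` may be `∞`; the factor `min c 1` is finite and nonzero and still dominated by `c`.
  set d := min c 1
  have hd₀ : d ≠ 0 := by simp [d, hc]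
  have hd_top : d ≠ ∞ := (min_le_right c 1).trans_lt one_lt_top |>.ne
  have hfd : Tendsto (fun x => f x * d) l (𝓝 0) :=
    tendsto_of_tendsto_of_tendsto_of_le_of_le tendsto_const_nhds hf (fun _ => zero_le)
      fun x => mul_le_mul_right (min_le_left c 1) (f x)
  simpa [ENNReal.mul_inv_cancel_right hd₀ hd_top] using
    ENNReal.Tendsto.mul_const hfd (Or.inr (ENNReal.inv_ne_top.mpr hd₀))

end ENNReal

theorem tsum_matPow_succ (P : ℕ → ℕ → ℝ≥0∞) (n j : ℕ) :
    ∑' i, matPow P (n + 1) i j = ∑' k, (∑' i, matPow P n i k) * P k j := by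
  simp only [matPow]
  rw [ENNReal.tsum_comm]
  exact tsum_congr fun k => ENNReal.tsum_mul_right

theorem tsum_matPow_mul_le_tsum_matPow_succ (P : ℕ → ℕ → ℝ≥0∞) (n k j : ℕ) :
    (∑' i, matPow P n i k) * P k j ≤ ∑' i, matPow P (n + 1) i j :=
  tsum_matPow_succ P n j ▸ ENNReal.le_tsum k

theorem one_column_decay_implies_all_general
    (P : ℕ → ℕ → ℝ≥0∞)
    (j₀ : ℕ)
    (hj₀ : Tendsto (fun n => ∑' i, matPow P n i j₀) atTop (𝓝 0))
    (hpos : ∀ i, 0 < P i j₀) :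
    ∀ j, Tendsto (fun n => ∑' i, matPow P n i j) atTop (𝓝 0) := by
  intro j
  refine ENNReal.tendsto_nhds_zero_of_mul_const (hpos j).ne' ?_
  exact tendsto_of_tendsto_of_tendsto_of_le_of_le tendsto_const_nhds
    (hj₀.comp (tendsto_add_atTop_nat 1)) (fun _ => zero_le)
    fun n => tsum_matPow_mul_le_tsum_matPow_succ P n j j₀

/-- Theorem T05: Let `P` be a nonnegative matrix whose powers have finite column
sums for `n ≥ n₀`. If `∑_i (Pⁿ)_{i j₀} → 0` for one index `j₀` with `p_{i j₀} > 0` for every `i`,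
then `∑_i (Pⁿ)_{ij} → 0` for every index `j`. -/
theorem one_column_decay_implies_all
    (P : ℕ → ℕ → ℝ≥0∞)
    (n₀ : ℕ)
    (hfin : ∀ n, n₀ ≤ n → ∀ j, ∑' i, matPow P n i j ≠ ⊤)
    (j₀ : ℕ)
    (hj₀ : Tendsto (fun n => ∑' i, matPow P n i j₀) atTop (𝓝 0))
    (hpos : ∀ i, 0 < P i j₀) :
    ∀ j, Tendsto (fun n => ∑' i, matPow P n i j) atTop (𝓝 0) :=
  one_column_decay_implies_all_general P j₀ hj₀ hpos
end
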